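/- (Semantic direction of the sure-winning equivalence theorem.) Let G be a reachability game with inference mechanism η. If s ∈ Win2(A1), then for every initial perception X0 ⊆ A1 there exists a choice map μ assigning to each v ∈ V2 with M(v) ≠ ∅ an action μ(v) ∈ M(v) such that: every infinite sequence v_0 v_1 v_2 ... with v_0 = (s, X0), with v_{i+1} = Δ(v_i, a) for some a ∈ A1 whenever v_i ∈ V1, and v_{i+1} = Δ(v_i, μ(v_i)) whenever v_i ∈ V2, never visits 𝓕. In particular, no P1 strategy is deceptively sure winning from (s, X0). -/
import Mathlib


/-!
Reachability games with one-sided incomplete information of action sets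
(Kulkarni & Fu, "Synthesis of Deceptive Strategies in Reachability Games
with Action Misperception").

Encoding: the game `G = (S, S1, S2, A1, A2, T, F)` is modeled with
* a type `S` of states, `S1 = {s | G.isP1 s}`, `S2` its complement,
* a type `A` for P1's full action set `A1` and a type `B` for P2's action
  set `A2` (disjointness is automatic), so a perception of P1's action set
  is a subset `X : Set A` and the full perception `A1` is `Set.univ`,
* transition functions `T1 : S → A → S` and `T2 : S → B → S`,
* final states `F : Set S`.
-/

structure RGame (S A B : Type) where
  isP1 : S → Prop
  T1 : S → A → S
  T2 : S → B → S
  F : Set S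

namespace RGame

variable {S A B : Type}

/-- The attractor iterates `Z_k(X)` for P1 under perception `X ⊆ A1`:
`Z_0(X) = F` and
`Z_{k+1}(X) = Z_k(X) ∪ {s ∈ S1 | ∃ a ∈ X, T(s,a) ∈ Z_k(X)} ∪ {s ∈ S2 | ∀ b ∈ A2, T(s,b) ∈ Z_k(X)}`. -/
def attr (G : RGame S A B) (X : Set A) : ℕ → Set S
  | 0 => G.F
  | k + 1 =>
      attr G X k ∪
        {s | G.isP1 s ∧ ∃ a ∈ X, G.T1 s a ∈ attr G X k} ∪
        {s | ¬ G.isP1 s ∧ ∀ b : B, G.T2 s b ∈ attr G X k}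

/-- P1's sure winning region under perception `X`: `Win1(X) = ⋃ k, Z_k(X)`. -/
def Win1 (G : RGame S A B) (X : Set A) : Set S := ⋃ k, G.attr X k

/-- P2's winning region under perception `X`: `Win2(X) = S \ Win1(X)`. -/
def Win2 (G : RGame S A B) (X : Set A) : Set S := (G.Win1 X)ᶜ

/-- Perceptually permissive actions of P2 at `s` under perception `X`:
`M_X(s) = {b ∈ A2 | T(s,b) ∈ Win2(X)}`. -/
def Mperm (G : RGame S A B) (X : Set A) (s : S) : Set B :=
  {b | G.T2 s b ∈ G.Win2 X}

/-- Hypergame transition on `V = S × 2^{A1}` for a P1 action: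
`Δ((s,X), a) = (T(s,a), η(X,a))`. -/
def delta1 (G : RGame S A B) (η : Set A → A → Set A) (v : S × Set A) (a : A) :
    S × Set A :=
  (G.T1 v.1 a, η v.2 a)

/-- Hypergame transition on `V = S × 2^{A1}` for a P2 action:
`Δ((s,X), b) = (T(s,b), X)`. -/
def delta2 (G : RGame S A B) (v : S × Set A) (b : B) : S × Set A :=
  (G.T2 v.1 b, v.2)

/-- Perceptually permissive actions at a hypergame state `v = (s, X)`:
`M(v) = M_X(s)`. -/
def M (G : RGame S A B) (v : S × Set A) : Set B := G.Mperm v.2 v.1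

/-- Final states are absorbing: every action from a final state leads
to a final state. -/
def Absorbing (G : RGame S A B) : Prop :=
  ∀ s ∈ G.F, (∀ a : A, G.T1 s a ∈ G.F) ∧ (∀ b : B, G.T2 s b ∈ G.F)

/-- `DPre1(U) = {v ∈ V1 | ∃ a ∈ A1, Δ(v,a) ∈ U}` (also `DAPre1^1`). -/
def DPre1 (G : RGame S A B) (η : Set A → A → Set A) (U : Set (S × Set A)) :
    Set (S × Set A) :=
  {v | G.isP1 v.1 ∧ ∃ a : A, G.delta1 η v a ∈ U}

/-- `DPre2(U) = {v ∈ V2 | ∀ b ∈ M(v), Δ(v,b) ∈ U}` (also `DAPre^2`). -/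
def DPre2 (G : RGame S A B) (U : Set (S × Set A)) : Set (S × Set A) :=
  {v | ¬ G.isP1 v.1 ∧ ∀ b ∈ G.M v, G.delta2 v b ∈ U}

/-- `DAPre2^1(U) = {v ∈ V1 | ∀ a ∈ A1, Δ(v,a) ∈ U}`. -/
def DAPre21 (G : RGame S A B) (η : Set A → A → Set A) (U : Set (S × Set A)) :
    Set (S × Set A) :=
  {v | G.isP1 v.1 ∧ ∀ a : A, G.delta1 η v a ∈ U}

/-- The deceptive sure-winning iteration:
`W_0 = Win1(A1) × 2^{A1}`, `W_{k+1} = W_k ∪ DPre1(W_k) ∪ DPre2(W_k)`. -/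
def DSWiter (G : RGame S A B) (η : Set A → A → Set A) : ℕ → Set (S × Set A)
  | 0 => {v | v.1 ∈ G.Win1 Set.univ}
  | k + 1 =>
      DSWiter G η k ∪ G.DPre1 η (DSWiter G η k) ∪ G.DPre2 (DSWiter G η k)

/-- The deceptive sure winning region `DSWin1`, the least fixed point of the
`DSWiter` iteration. -/
def DSWin1 (G : RGame S A B) (η : Set A → A → Set A) : Set (S × Set A) :=
  ⋃ k, G.DSWiter η k

/-- `Safe1(U)`: the greatest `Y ⊆ U` with `Y ⊆ DAPre1^1(Y) ∪ DAPre^2(Y)`,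
realized as the union of all post-fixed points. -/
def Safe1 (G : RGame S A B) (η : Set A → A → Set A) (U : Set (S × Set A)) :
    Set (S × Set A) :=
  ⋃₀ {Y | Y ⊆ U ∧ Y ⊆ G.DPre1 η Y ∪ G.DPre2 Y}

/-- `Safe2(U)`: the greatest `Y ⊆ U` with `Y ⊆ DAPre2^1(Y) ∪ DAPre^2(Y)`,
realized as the union of all post-fixed points. -/
def Safe2 (G : RGame S A B) (η : Set A → A → Set A) (U : Set (S × Set A)) :
    Set (S × Set A) :=
  ⋃₀ {Y | Y ⊆ U ∧ Y ⊆ G.DAPre21 η Y ∪ G.DPre2 Y}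

/-- The DASW iterates: `Z_0 = Win1(A1) × 2^{A1}` and
`Z_{k+1} = Safe1(V \ C_k)` where `C_k = Safe2(V \ Z_k)`. -/
def Zda (G : RGame S A B) (η : Set A → A → Set A) : ℕ → Set (S × Set A)
  | 0 => {v | v.1 ∈ G.Win1 Set.univ}
  | k + 1 => G.Safe1 η (G.Safe2 η (Zda G η k)ᶜ)ᶜ

/-- `C_k = Safe2(V \ Z_k)`, the region in which P2 can enforce the play to stay. -/
def Cda (G : RGame S A B) (η : Set A → A → Set A) (k : ℕ) : Set (S × Set A) :=
  G.Safe2 η (G.Zda η k)ᶜ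

/-- The deceptive almost-sure winning region: `DAWin1 = ⋃ k, Z_k`. -/
def DAWin1 (G : RGame S A B) (η : Set A → A → Set A) : Set (S × Set A) :=
  ⋃ k, G.Zda η k

/-- One step `v → v'` of a play consistent with a memoryless P1 strategy `π`
against perceptually permissive P2 behavior: at a P1 state, P1 plays `π(v)`;
at a P2 state, P2 plays some `b ∈ M(v)` when `M(v) ≠ ∅`, and an arbitrary
`b ∈ A2` otherwise. -/
def ConsStep (G : RGame S A B) (η : Set A → A → Set A) (π : S × Set A → A)
    (v v' : S × Set A) : Prop :=
  (G.isP1 v.1 ∧ v' = G.delta1 η v (π v)) ∨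
    (¬ G.isP1 v.1 ∧ ∃ b : B, ((G.M v).Nonempty → b ∈ G.M v) ∧ v' = G.delta2 v b)

lemma attr_mono_k (G : RGame S A B) (X : Set A) : Monotone (G.attr X) := by
  apply monotone_nat_of_le_succ
  intro k s hs
  exact Or.inl (Or.inl hs)

lemma attr_mono_X (G : RGame S A B) {X Y : Set A} (h : X ⊆ Y) (k : ℕ) :
    G.attr X k ⊆ G.attr Y k := by
  induction k with
  | zero => exact le_rfl
  | succ k ih =>
    rintro s ((hs | ⟨h1, a, ha, hT⟩) | ⟨h2, hT⟩)
    · exact Or.inl (Or.inl (ih hs))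
    · exact Or.inl (Or.inr ⟨h1, a, h ha, ih hT⟩)
    · exact Or.inr ⟨h2, fun b => ih (hT b)⟩

lemma win2_univ_subset (G : RGame S A B) (X : Set A) :
    G.Win2 Set.univ ⊆ G.Win2 X := by
  intro s hs hmem
  apply hs
  obtain ⟨_, ⟨k, rfl⟩, hk⟩ := hmem
  exact Set.mem_iUnion.2 ⟨k, attr_mono_X G (Set.subset_univ X) k hk⟩

lemma win2_step1 (G : RGame S A B) {s : S} (hs : s ∈ G.Win2 Set.univ)
    (h1 : G.isP1 s) (a : A) : G.T1 s a ∈ G.Win2 Set.univ := by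
  intro hmem
  apply hs
  obtain ⟨_, ⟨k, rfl⟩, hk⟩ := hmem
  exact Set.mem_iUnion.2 ⟨k + 1, Or.inl (Or.inr ⟨h1, a, Set.mem_univ a, hk⟩)⟩

lemma win2_step2 [Fintype B] (G : RGame S A B) {s : S} (hs : s ∈ G.Win2 Set.univ)
    (h2 : ¬ G.isP1 s) : ∃ b : B, G.T2 s b ∈ G.Win2 Set.univ := by
  by_contra hcon
  push_neg at hcon
  apply hs
  have hall : ∀ b : B, ∃ k, G.T2 s b ∈ G.attr Set.univ k := by
    intro b
    have : G.T2 s b ∈ G.Win1 Set.univ := not_not.1 (hcon b)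
    obtain ⟨_, ⟨k, rfl⟩, hk⟩ := this
    exact ⟨k, hk⟩
  choose f hf using hall
  obtain ⟨K, hK⟩ := Finset.exists_le (Finset.univ.image f)
  refine Set.mem_iUnion.2 ⟨K + 1, Or.inr ⟨h2, fun b => ?_⟩⟩
  exact attr_mono_k G _ (hK (f b) (Finset.mem_image_of_mem f (Finset.mem_univ b))) (hf b)

end RGame
/-- **Semantic direction of Theorem 1.**
If `s ∈ Win2(A1)`, then for every initial perception `X0` there is a choice
map `μ` selecting a perceptually permissive action at every hypergame P2
state with `M(v) ≠ ∅`, such that every infinite play from `(s, X0)` in which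
P1 moves arbitrarily and P2 moves according to `μ` never visits
`𝓕 = F × 2^{A1}`; in particular no P1 strategy is deceptively sure winning
from `(s, X0)`. -/
theorem win2_no_deceptive_sure_winning
    (S A B : Type) [Fintype S] [Fintype A] [Fintype B] [Nonempty A] [Nonempty B]
    (G : RGame S A B) (η : Set A → A → Set A)
    (hη : ∀ (X : Set A) (a : A), a ∈ η X a)
    (s : S) (hs : s ∈ G.Win2 Set.univ) (X0 : Set A) :
    ∃ μ : S × Set A → B,
      (∀ v : S × Set A, (G.M v).Nonempty → μ v ∈ G.M v) ∧
      ∀ ρ : ℕ → S × Set A, ρ 0 = (s, X0) →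
        (∀ i : ℕ,
          (G.isP1 (ρ i).1 ∧ ∃ a : A, ρ (i + 1) = G.delta1 η (ρ i) a) ∨
          (¬ G.isP1 (ρ i).1 ∧ ρ (i + 1) = G.delta2 (ρ i) (μ (ρ i)))) →
        ∀ n : ℕ, (ρ n).1 ∉ G.F := by
  classical
  refine ⟨fun v => if h : ∃ b : B, G.T2 v.1 b ∈ G.Win2 Set.univ then h.choose
    else if h2 : (G.M v).Nonempty then h2.choose else Classical.arbitrary B, ?_, ?_⟩
  · intro v hv
    by_cases h : ∃ b : B, G.T2 v.1 b ∈ G.Win2 Set.univ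
    · simp only [dif_pos h]
      exact RGame.win2_univ_subset G v.2 h.choose_spec
    · simp only [dif_neg h, dif_pos hv]
      exact hv.choose_spec
  · intro ρ hρ0 hstep n
    have key : ∀ n : ℕ, (ρ n).1 ∈ G.Win2 Set.univ := by
      intro n
      induction n with
      | zero => rw [hρ0]; exact hs
      | succ n ih =>
        rcases hstep n with ⟨h1, a, ha⟩ | ⟨h2, hb⟩
        · rw [ha]
          exact RGame.win2_step1 G ih h1 a
        · rw [hb]
          have hex : ∃ b : B, G.T2 (ρ n).1 b ∈ G.Win2 Set.univ :=
            RGame.win2_step2 G ih h2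
          simp only [dif_pos hex]
          exact hex.choose_spec
    intro hF
    exact key n (Set.mem_iUnion.2 ⟨0, hF⟩)
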